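/- Let n, m ≥ 1 and let A_1, …, A_m be n×n nonnegative real matrices such that for all i, j there exists l with (A_l)_{ij} > 0 or (A_l)_{ji} > 0. Define B by B_{ij} = max_{1≤l≤m} max((A_l)_{ij}, ((A_l)_{ji})^{-}) where t^{-} = 1/t if t > 0 and t^{-} = 0 otherwise, and let μ = λ(B) be the max-times spectral radius of B. A positive vector x ∈ ℝ_{>0}^n satisfies max_{1≤l≤m} ρ(A_l, x) = μ (i.e., x minimizes this objective over positive vectors) if and only if there exists a positive vector u ∈ ℝ_{>0}^n such that x = (μ^{-1}B)^* ⊗ u. -/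

import Mathlib

open scoped BigOperators

noncomputable section

/-- The max-times spectral radius (maximum geometric cycle mean) of a
nonnegative `n × n` real matrix. -/
def mtSpecRad {n : ℕ} (A : Matrix (Fin n) (Fin n) ℝ) : ℝ :=
  sSup { r : ℝ | ∃ (k : ℕ) (hk : 0 < k), k ≤ n ∧ ∃ f : Fin k → Fin n,
    r = (∏ t : Fin k, A (f t) (f ⟨((t : ℕ) + 1) % k, Nat.mod_lt _ hk⟩)) ^ ((k : ℝ)⁻¹) }

/-- The maximum cycle mean of a real `n × n` matrix (max-plus spectral radius). -/
def mpCycleMean {n : ℕ} (A : Matrix (Fin n) (Fin n) ℝ) : ℝ :=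
  sSup { r : ℝ | ∃ (k : ℕ) (hk : 0 < k), k ≤ n ∧ ∃ f : Fin k → Fin n,
    r = (∑ t : Fin k, A (f t) (f ⟨((t : ℕ) + 1) % k, Nat.mod_lt _ hk⟩)) / (k : ℝ) }

/-- Max-times matrix product. -/
def mtMul {n : ℕ} (A B : Matrix (Fin n) (Fin n) ℝ) : Matrix (Fin n) (Fin n) ℝ :=
  Matrix.of fun i j => ⨆ k : Fin n, A i k * B k j

/-- Max-times matrix powers, with `A^{⊗0} = I`. -/
def mtPow {n : ℕ} (A : Matrix (Fin n) (Fin n) ℝ) : ℕ → Matrix (Fin n) (Fin n) ℝ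
  | 0 => Matrix.of fun i j => if i = j then 1 else 0
  | (k + 1) => mtMul (mtPow A k) A

/-- Max-times Kleene star: entrywise maximum of `I, S, S^{⊗2}, …, S^{⊗(n-1)}`. -/
def mtStar {n : ℕ} (S : Matrix (Fin n) (Fin n) ℝ) : Matrix (Fin n) (Fin n) ℝ :=
  Matrix.of fun i j => ⨆ k : Fin n, mtPow S (k : ℕ) i j

/-- Max-times matrix-vector product. -/
def mtVecMul {n : ℕ} (S : Matrix (Fin n) (Fin n) ℝ) (u : Fin n → ℝ) : Fin n → ℝ :=
  fun i => ⨆ j, S i j * u j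

/-- Max-plus matrix product. -/
def mpMul {n : ℕ} (A B : Matrix (Fin n) (Fin n) ℝ) : Matrix (Fin n) (Fin n) ℝ :=
  Matrix.of fun i j => ⨆ k : Fin n, (A i k + B k j)

/-- `mpPow A k` is the max-plus power `A^{⊗(k+1)}`. -/
def mpPow {n : ℕ} (A : Matrix (Fin n) (Fin n) ℝ) : ℕ → Matrix (Fin n) (Fin n) ℝ
  | 0 => A
  | (k + 1) => mpMul (mpPow A k) A

/-- Max-plus Kleene star: `S^*_{ii} = max(0, max_{1≤k≤n-1} (S^{⊗k})_{ii})` and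
`S^*_{ij} = max_{1≤k≤n-1} (S^{⊗k})_{ij}` for `i ≠ j`. -/
def mpStar {n : ℕ} (S : Matrix (Fin n) (Fin n) ℝ) : Matrix (Fin n) (Fin n) ℝ :=
  Matrix.of fun i j =>
    if i = j then max 0 (⨆ k : Fin (n - 1), mpPow S (k : ℕ) i j)
    else ⨆ k : Fin (n - 1), mpPow S (k : ℕ) i j

/-- Max-plus matrix-vector product. -/
def mpVecMul {n : ℕ} (S : Matrix (Fin n) (Fin n) ℝ) (x : Fin n → ℝ) : Fin n → ℝ :=
  fun i => ⨆ j, (S i j + x j)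

/-- Chebyshev-like (max-times) distance between a nonnegative matrix `A` and the
rank-one reciprocal matrix with entries `x i / x j`. -/
def mtRho {n : ℕ} (A : Matrix (Fin n) (Fin n) ℝ) (x : Fin n → ℝ) : ℝ :=
  max (⨆ p : Fin n × Fin n, A p.1 p.2 * x p.2 / x p.1)
    (sSup { r : ℝ | ∃ i j, 0 < A i j ∧ r = x i / (A i j * x j) })

/-- The alternating max-times product `A ⊗ C^{⊗ i₁} ⊗ A ⊗ C^{⊗ i₂} ⊗ ⋯ ⊗ A ⊗ C^{⊗ i_k}`. -/
def mtChain {n : ℕ} (A C : Matrix (Fin n) (Fin n) ℝ) :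
    (k : ℕ) → (Fin k → ℕ) → Matrix (Fin n) (Fin n) ℝ
  | 0, _ => Matrix.of fun i j => if i = j then 1 else 0
  | (k + 1), f => mtMul (mtMul A (mtPow C (f 0))) (mtChain A C k (fun t => f t.succ))

/-- The optimal value `θ` of the constrained max-times approximation problem. -/
def mtTheta {n : ℕ} (A C : Matrix (Fin n) (Fin n) ℝ) : ℝ :=
  max (mtSpecRad A)
    (sSup { r : ℝ | ∃ k : ℕ, 0 < k ∧ k ≤ n - 1 ∧ ∃ f : Fin k → ℕ,
      1 ≤ ∑ t, f t ∧ (∑ t, f t) ≤ n - k ∧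
      r = (⨆ i, mtChain A C k f i i) ^ ((k : ℝ)⁻¹) })


/-!
With `f(x) = max_{i,j} B i j * x j / x i`, every ratio occurring in some `ρ(A_l, x)` is bounded
by a term of `f(x)` and every term of `f(x)` is such a ratio (or is `≤ 0`), so
`max_l ρ(A_l, x) = f(x)`. Rescaling a cycle by `x` does not change its product, whence
`μ = λ(B) ≤ f(x)`; so `x` is a minimizer iff `B i j * x j ≤ μ * x i`, i.e. iff `x` is a
subeigenvector of `C = μ⁻¹ B`. A subeigenvector satisfies `x = C^* ⊗ x`. Conversely
`C ⊗ C^* ≤ C^*`: all cycles of `C` have weight at most `1`, so a walk of length `n`, which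
repeats a vertex, is dominated by the shorter walk obtained by cutting out that cycle.
-/

open Finset

section MaxTimesPowers

variable {n : ℕ} {C : Matrix (Fin n) (Fin n) ℝ}

theorem mtPow_zero_apply (i j : Fin n) : mtPow C 0 i j = if i = j then 1 else 0 := rfl

theorem mtPow_succ_apply (k : ℕ) (i j : Fin n) :
    mtPow C (k + 1) i j = ⨆ l, mtPow C k i l * C l j := rfl

theorem mtPow_nonneg (hC : ∀ i j, 0 ≤ C i j) (k : ℕ) (i j : Fin n) : 0 ≤ mtPow C k i j := by
  induction k generalizing j with
  | zero => rw [mtPow_zero_apply]; split_ifs <;> norm_num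
  | succ k ih => exact Real.iSup_nonneg fun l => mul_nonneg (ih l) (hC l j)

theorem mtPow_one_apply (hC : ∀ i j, 0 ≤ C i j) (i j : Fin n) : mtPow C 1 i j = C i j := by
  rw [mtPow_succ_apply]
  refine le_antisymm (Real.iSup_le (fun l => ?_) (hC i j)) ?_
  · rw [mtPow_zero_apply]
    split_ifs with h
    · rw [h, one_mul]
    · rw [zero_mul]; exact hC i j
  · calc C i j = mtPow C 0 i i * C i j := by simp [mtPow_zero_apply]
      _ ≤ ⨆ l, mtPow C 0 i l * C l j := Finite.le_ciSup_of_le i le_rfl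

theorem mtPow_mul_mtPow_le (hC : ∀ i j, 0 ≤ C i j) (a b : ℕ) (i l j : Fin n) :
    mtPow C a i l * mtPow C b l j ≤ mtPow C (a + b) i j := by
  induction b generalizing j with
  | zero =>
    rw [mtPow_zero_apply]
    split_ifs with h
    · simp [h]
    · rw [mul_zero]; exact mtPow_nonneg hC _ i j
  | succ b ih =>
    rw [mtPow_succ_apply, Real.mul_iSup_of_nonneg (mtPow_nonneg hC a i l), ← add_assoc,
      mtPow_succ_apply]
    refine Real.iSup_le (fun r => ?_) (mtPow_nonneg hC (a + b + 1) i j)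
    calc mtPow C a i l * (mtPow C b l r * C r j)
        = mtPow C a i l * mtPow C b l r * C r j := (mul_assoc _ _ _).symm
      _ ≤ mtPow C (a + b) i r * C r j := mul_le_mul_of_nonneg_right (ih r) (hC r j)
      _ ≤ ⨆ r, mtPow C (a + b) i r * C r j := Finite.le_ciSup_of_le r le_rfl

end MaxTimesPowers

section Walks

def walkWeight {n : ℕ} (C : Matrix (Fin n) (Fin n) ℝ) (p : ℕ → Fin n) (a b : ℕ) : ℝ :=
  ∏ t ∈ Ico a b, C (p t) (p (t + 1))

variable {n : ℕ} {C : Matrix (Fin n) (Fin n) ℝ}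

theorem walkWeight_nonneg (hC : ∀ i j, 0 ≤ C i j) (p : ℕ → Fin n) (a b : ℕ) :
    0 ≤ walkWeight C p a b :=
  prod_nonneg fun _ _ => hC _ _

theorem walkWeight_mul_walkWeight (p : ℕ → Fin n) {a b c : ℕ} (hab : a ≤ b) (hbc : b ≤ c) :
    walkWeight C p a b * walkWeight C p b c = walkWeight C p a c :=
  prod_Ico_consecutive _ hab hbc

theorem walkWeight_smul (r : ℝ) (p : ℕ → Fin n) (a b : ℕ) :
    walkWeight (r • C) p a b = r ^ (b - a) * walkWeight C p a b := by
  simp only [walkWeight, Matrix.smul_apply, smul_eq_mul, prod_mul_distrib, prod_const,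
    Nat.card_Ico]

theorem walkWeight_le_mtPow (hC : ∀ i j, 0 ≤ C i j) (p : ℕ → Fin n) {a b : ℕ} (hab : a ≤ b) :
    walkWeight C p a b ≤ mtPow C (b - a) (p a) (p b) := by
  obtain ⟨k, rfl⟩ := Nat.exists_eq_add_of_le hab
  rw [Nat.add_sub_cancel_left]
  induction k with
  | zero => simp [walkWeight, mtPow_zero_apply]
  | succ k ih =>
    rw [walkWeight, ← add_assoc, prod_Ico_succ_top (Nat.le_add_right a k), mtPow_succ_apply]
    exact (mul_le_mul_of_nonneg_right (ih (Nat.le_add_right a k)) (hC _ _)).trans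
      (Finite.le_ciSup_of_le (p (a + k)) le_rfl)

theorem exists_walk_mtPow_le (hC : ∀ i j, 0 ≤ C i j) {k : ℕ} (hk : 0 < k) (i j : Fin n) :
    ∃ p : ℕ → Fin n, p 0 = i ∧ p k = j ∧ mtPow C k i j ≤ walkWeight C p 0 k := by
  induction k, hk using Nat.le_induction generalizing j with
  | base =>
    exact ⟨fun t => if t = 0 then i else j, rfl, rfl, by simp [walkWeight, mtPow_one_apply hC]⟩
  | succ k hk ih =>
    have : Nonempty (Fin n) := ⟨i⟩
    obtain ⟨l, hl⟩ := Finite.exists_max fun l => mtPow C k i l * C l j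
    obtain ⟨p, hp0, hpk, hp⟩ := ih l
    set q : ℕ → Fin n := fun t => if t ≤ k then p t else j
    have hprefix : walkWeight C q 0 k = walkWeight C p 0 k :=
      prod_congr rfl fun t ht => by
        simp only [mem_Ico] at ht
        simp [q, ht.2.le, Nat.succ_le_of_lt ht.2]
    refine ⟨q, by simp [q, hp0], by simp [q], ?_⟩
    rw [walkWeight, prod_Ico_succ_top (Nat.zero_le k), ← walkWeight, hprefix, mtPow_succ_apply]
    simp only [q, le_refl, if_true, Nat.not_succ_le_self, if_false, hpk]
    exact (ciSup_le hl).trans (mul_le_mul_of_nonneg_right hp (hC l j))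

theorem exists_lt_le_apply_eq (p : ℕ → Fin n) : ∃ a b, a < b ∧ b ≤ n ∧ p a = p b := by
  obtain ⟨s, t, hst, h⟩ :=
    Fintype.exists_ne_map_eq_of_card_lt (fun t : Fin (n + 1) => p t) (by simp)
  rcases Fin.lt_or_lt_of_ne hst with hlt | hlt
  · exact ⟨s, t, hlt, Nat.lt_succ_iff.mp t.2, h⟩
  · exact ⟨t, s, hlt, Nat.lt_succ_iff.mp s.2, h.symm⟩

end Walks

section KleeneStar

/-- For a nonnegative matrix this says `λ(C) ≤ 1`. -/
def ClosedWalksWeightLeOne {n : ℕ} (C : Matrix (Fin n) (Fin n) ℝ) : Prop :=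
  ∀ (p : ℕ → Fin n) (a b : ℕ), a < b → b ≤ a + n → p a = p b → walkWeight C p a b ≤ 1

variable {n : ℕ} {C : Matrix (Fin n) (Fin n) ℝ}

theorem mtPow_le_mtStar {k : ℕ} (hk : k < n) (i j : Fin n) : mtPow C k i j ≤ mtStar C i j :=
  Finite.le_ciSup_of_le (⟨k, hk⟩ : Fin n) le_rfl

theorem one_le_mtStar_self (i : Fin n) : 1 ≤ mtStar C i i := by
  simpa [mtPow_zero_apply] using mtPow_le_mtStar (C := C) i.pos i i

theorem mtStar_nonneg (hC : ∀ i j, 0 ≤ C i j) (i j : Fin n) : 0 ≤ mtStar C i j :=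
  (mtPow_nonneg hC 0 i j).trans (mtPow_le_mtStar i.pos i j)

theorem mtPow_self_le_mtStar (hC : ∀ i j, 0 ≤ C i j) (hcyc : ClosedWalksWeightLeOne C)
    (i j : Fin n) : mtPow C n i j ≤ mtStar C i j := by
  obtain ⟨p, rfl, rfl, hp⟩ := exists_walk_mtPow_le hC i.pos i j
  obtain ⟨a, b, hab, hbn, hpab⟩ := exists_lt_le_apply_eq p
  have hW := walkWeight_nonneg hC p
  calc mtPow C n (p 0) (p n)
      ≤ walkWeight C p 0 a * walkWeight C p a b * walkWeight C p b n := by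
        rwa [walkWeight_mul_walkWeight p (Nat.zero_le a) hab.le,
          walkWeight_mul_walkWeight p (Nat.zero_le b) hbn]
    _ ≤ walkWeight C p 0 a * walkWeight C p b n := by
        have := hcyc p a b hab (by omega) hpab
        exact mul_le_mul_of_nonneg_right (mul_le_of_le_one_right (hW 0 a) this) (hW b n)
    _ ≤ mtPow C a (p 0) (p a) * mtPow C (n - b) (p a) (p n) := by
        rw [hpab]
        refine mul_le_mul ?_ (walkWeight_le_mtPow hC p hbn) (hW b n) (mtPow_nonneg hC _ _ _)
        simpa [← hpab] using walkWeight_le_mtPow hC p (Nat.zero_le a)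
    _ ≤ mtPow C (a + (n - b)) (p 0) (p n) := mtPow_mul_mtPow_le hC _ _ _ _ _
    _ ≤ mtStar C (p 0) (p n) := mtPow_le_mtStar (by omega) _ _

theorem mtPow_le_mtStar_of_le (hC : ∀ i j, 0 ≤ C i j) (hcyc : ClosedWalksWeightLeOne C)
    {k : ℕ} (hk : k ≤ n) (i j : Fin n) : mtPow C k i j ≤ mtStar C i j := by
  rcases hk.lt_or_eq with hk | rfl
  · exact mtPow_le_mtStar hk i j
  · exact mtPow_self_le_mtStar hC hcyc i j

theorem mul_mtStar_le (hC : ∀ i j, 0 ≤ C i j) (hcyc : ClosedWalksWeightLeOne C)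
    (i j k : Fin n) : C i j * mtStar C j k ≤ mtStar C i k := by
  change C i j * (⨆ s : Fin n, mtPow C s j k) ≤ _
  rw [Real.mul_iSup_of_nonneg (hC i j)]
  refine Real.iSup_le (fun s => ?_) (mtStar_nonneg hC i k)
  calc C i j * mtPow C s j k = mtPow C 1 i j * mtPow C s j k := by rw [mtPow_one_apply hC]
    _ ≤ mtPow C (1 + s) i k := mtPow_mul_mtPow_le hC 1 s i j k
    _ ≤ mtStar C i k := mtPow_le_mtStar_of_le hC hcyc (by omega) i k

theorem mtPow_mul_le_of_subeigen (hC : ∀ i j, 0 ≤ C i j) {x : Fin n → ℝ} (hx : ∀ i, 0 ≤ x i)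
    (hsub : ∀ i j, C i j * x j ≤ x i) (k : ℕ) (i j : Fin n) : mtPow C k i j * x j ≤ x i := by
  induction k generalizing j with
  | zero =>
    rw [mtPow_zero_apply]
    split_ifs with h
    · rw [h, one_mul]
    · rw [zero_mul]; exact hx i
  | succ k ih =>
    rw [mtPow_succ_apply, Real.iSup_mul_of_nonneg (hx j)]
    refine Real.iSup_le (fun l => ?_) (hx i)
    calc mtPow C k i l * C l j * x j = mtPow C k i l * (C l j * x j) := mul_assoc _ _ _
      _ ≤ mtPow C k i l * x l := mul_le_mul_of_nonneg_left (hsub l j) (mtPow_nonneg hC k i l)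
      _ ≤ x i := ih l

theorem mtVecMul_mtStar_of_subeigen (hC : ∀ i j, 0 ≤ C i j) {x : Fin n → ℝ}
    (hx : ∀ i, 0 ≤ x i) (hsub : ∀ i j, C i j * x j ≤ x i) : mtVecMul (mtStar C) x = x := by
  funext i
  refine le_antisymm (Real.iSup_le (fun j => ?_) (hx i)) ?_
  · change (⨆ s : Fin n, mtPow C s i j) * x j ≤ x i
    rw [Real.iSup_mul_of_nonneg (hx j)]
    exact Real.iSup_le (fun s => mtPow_mul_le_of_subeigen hC hx hsub s i j) (hx i)
  · calc x i ≤ mtStar C i i * x i := le_mul_of_one_le_left (hx i) (one_le_mtStar_self i)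
      _ ≤ ⨆ j, mtStar C i j * x j := Finite.le_ciSup_of_le i le_rfl

theorem mul_mtVecMul_mtStar_le (hC : ∀ i j, 0 ≤ C i j) (hcyc : ClosedWalksWeightLeOne C)
    {u : Fin n → ℝ} (hu : ∀ i, 0 ≤ u i) (i j : Fin n) :
    C i j * mtVecMul (mtStar C) u j ≤ mtVecMul (mtStar C) u i := by
  change C i j * (⨆ k, mtStar C j k * u k) ≤ ⨆ k, mtStar C i k * u k
  rw [Real.mul_iSup_of_nonneg (hC i j)]
  refine Real.iSup_le (fun k => ?_) (Real.iSup_nonneg fun k => mul_nonneg (mtStar_nonneg hC i k) (hu k))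
  calc C i j * (mtStar C j k * u k) = C i j * mtStar C j k * u k := (mul_assoc _ _ _).symm
    _ ≤ mtStar C i k * u k := mul_le_mul_of_nonneg_right (mul_mtStar_le hC hcyc i j k) (hu k)
    _ ≤ ⨆ k, mtStar C i k * u k := Finite.le_ciSup_of_le k le_rfl

theorem subeigen_iff_exists_eq_mtVecMul_mtStar (hC : ∀ i j, 0 ≤ C i j)
    (hcyc : ClosedWalksWeightLeOne C) {x : Fin n → ℝ} (hx : ∀ i, 0 < x i) :
    (∀ i j, C i j * x j ≤ x i) ↔ ∃ u : Fin n → ℝ, (∀ i, 0 < u i) ∧ x = mtVecMul (mtStar C) u := by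
  constructor
  · exact fun hsub => ⟨x, hx, (mtVecMul_mtStar_of_subeigen hC (fun i => (hx i).le) hsub).symm⟩
  · rintro ⟨u, hu, rfl⟩
    exact mul_mtVecMul_mtStar_le hC hcyc fun i => (hu i).le

end KleeneStar

section SpectralRadius

variable {n : ℕ} {B : Matrix (Fin n) (Fin n) ℝ}

theorem prod_rpow_inv_le {k : ℕ} (hk : 0 < k) {g : Fin k → ℝ} {K : ℝ} (hg : ∀ t, 0 ≤ g t)
    (hgK : ∀ t, g t ≤ K) : (∏ t, g t) ^ ((k : ℝ)⁻¹) ≤ K := by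
  have hK : 0 ≤ K := (hg ⟨0, hk⟩).trans (hgK _)
  rw [Real.rpow_inv_le_iff_of_pos (prod_nonneg fun t _ => hg t) hK (Nat.cast_pos.mpr hk),
    Real.rpow_natCast]
  calc ∏ t, g t ≤ ∏ _t : Fin k, K := prod_le_prod (fun t _ => hg t) fun t _ => hgK t
    _ = K ^ k := by simp

theorem le_mtSpecRad (hB : ∀ i j, 0 ≤ B i j) {k : ℕ} (hk : 0 < k) (hkn : k ≤ n)
    (f : Fin k → Fin n) :
    (∏ t : Fin k, B (f t) (f ⟨((t : ℕ) + 1) % k, Nat.mod_lt _ hk⟩)) ^ ((k : ℝ)⁻¹) ≤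
      mtSpecRad B := by
  refine le_csSup ⟨⨆ p : Fin n × Fin n, B p.1 p.2, ?_⟩ ⟨k, hk, hkn, f, rfl⟩
  rintro _ ⟨k, hk, -, f, rfl⟩
  exact prod_rpow_inv_le hk (fun t => hB _ _) fun t => Finite.le_ciSup_of_le (_, _) le_rfl

theorem diag_le_mtSpecRad (hB : ∀ i j, 0 ≤ B i j) (i : Fin n) : B i i ≤ mtSpecRad B := by
  simpa using le_mtSpecRad hB one_pos i.pos fun _ => i

theorem walkWeight_le_mtSpecRad_pow (hB : ∀ i j, 0 ≤ B i j) (p : ℕ → Fin n) {a b : ℕ}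
    (hab : a < b) (hbn : b ≤ a + n) (hp : p a = p b) :
    walkWeight B p a b ≤ mtSpecRad B ^ (b - a) := by
  have hk : 0 < b - a := Nat.sub_pos_of_lt hab
  have hcycle : walkWeight B p a b =
      ∏ t : Fin (b - a), B (p (a + t)) (p (a + ((t : ℕ) + 1) % (b - a))) := by
    rw [walkWeight, prod_Ico_eq_prod_range, ← Fin.prod_univ_eq_prod_range]
    refine Fintype.prod_congr _ _ fun t => ?_
    rcases Nat.lt_or_ge ((t : ℕ) + 1) (b - a) with h | h
    · rw [Nat.mod_eq_of_lt h, add_assoc]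
    · have h' : (t : ℕ) + 1 = b - a := by omega
      rw [h', Nat.mod_self, add_zero, hp, add_assoc, h', Nat.add_sub_cancel' hab.le]
  have hmean := le_mtSpecRad hB hk (by omega) fun t => p (a + t)
  rw [← hcycle] at hmean
  rwa [Real.rpow_inv_le_iff_of_pos (walkWeight_nonneg hB p a b)
    ((Real.rpow_nonneg (walkWeight_nonneg hB p a b) _).trans hmean) (Nat.cast_pos.mpr hk),
    Real.rpow_natCast] at hmean

theorem closedWalksWeightLeOne_inv_mtSpecRad_smul (hB : ∀ i j, 0 ≤ B i j)
    (hpos : 0 < mtSpecRad B) : ClosedWalksWeightLeOne ((mtSpecRad B)⁻¹ • B) := by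
  intro p a b hab hbn hp
  rw [walkWeight_smul, inv_pow, inv_mul_le_one₀ (pow_pos hpos _)]
  exact walkWeight_le_mtSpecRad_pow hB p hab hbn hp

theorem mtSpecRad_le_of_mul_le (hB : ∀ i j, 0 ≤ B i j) {x : Fin n → ℝ} (hx : ∀ i, 0 < x i)
    {r : ℝ} (hr : 0 ≤ r) (h : ∀ i j, B i j * x j ≤ r * x i) : mtSpecRad B ≤ r := by
  refine Real.sSup_le ?_ hr
  rintro _ ⟨k, hk, -, f, rfl⟩
  have : NeZero k := ⟨hk.ne'⟩
  set σ : Fin k → Fin k := fun t => ⟨((t : ℕ) + 1) % k, Nat.mod_lt _ hk⟩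
  have hσ : ∏ t, x (f (σ t)) = ∏ t, x (f t) := by
    have hσ1 : ∀ t, σ t = t + 1 := fun t => by ext; simp [σ, Fin.add_def]
    simp only [hσ1]
    exact Equiv.prod_comp (Equiv.addRight 1) fun t => x (f t)
  have hscale : ∏ t, B (f t) (f (σ t)) = ∏ t, B (f t) (f (σ t)) * x (f (σ t)) / x (f t) := by
    rw [prod_div_distrib, prod_mul_distrib, hσ,
      mul_div_cancel_right₀ _ (prod_pos fun t _ => hx _).ne']
  rw [hscale]
  refine prod_rpow_inv_le hk (fun t => ?_) fun t => (div_le_iff₀ (hx _)).mpr (h _ _)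
  exact div_nonneg (mul_nonneg (hB _ _) (hx _).le) (hx _).le

end SpectralRadius

section Objective

variable {n : ℕ} {x : Fin n → ℝ}

theorem le_mtRho_left (A : Matrix (Fin n) (Fin n) ℝ) (i j : Fin n) :
    A i j * x j / x i ≤ mtRho A x :=
  le_max_of_le_left (Finite.le_ciSup_of_le (i, j) le_rfl)

theorem le_mtRho_right {A : Matrix (Fin n) (Fin n) ℝ} {i j : Fin n} (h : 0 < A i j) :
    x i / (A i j * x j) ≤ mtRho A x := by
  have hbdd : BddAbove {r : ℝ | ∃ i j, 0 < A i j ∧ r = x i / (A i j * x j)} :=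
    ((Set.finite_range fun p : Fin n × Fin n => x p.1 / (A p.1 p.2 * x p.2)).subset
      (by rintro _ ⟨i, j, -, rfl⟩; exact ⟨(i, j), rfl⟩)).bddAbove
  exact le_max_of_le_right (le_csSup hbdd ⟨i, j, h, rfl⟩)

theorem mtRho_nonneg (A : Matrix (Fin n) (Fin n) ℝ) (hx : ∀ i, 0 < x i) : 0 ≤ mtRho A x :=
  le_max_of_le_right <| Real.sSup_nonneg <| by
    rintro _ ⟨i, j, hij, rfl⟩
    have := hx i
    have := hx j
    positivity

variable {ι : Type*} [Finite ι] {A : ι → Matrix (Fin n) (Fin n) ℝ} {B : Matrix (Fin n) (Fin n) ℝ}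

theorem iSup_mul_div_nonneg (hB₀ : ∀ i j, 0 ≤ B i j) (hx : ∀ i, 0 < x i) :
    0 ≤ ⨆ p : Fin n × Fin n, B p.1 p.2 * x p.2 / x p.1 :=
  Real.iSup_nonneg fun _ => div_nonneg (mul_nonneg (hB₀ _ _) (hx _).le) (hx _).le

theorem mtRho_le_iSup_mul_div (hB : ∀ i j, B i j = ⨆ l, max (A l i j) (A l j i)⁻¹)
    (hB₀ : ∀ i j, 0 ≤ B i j) (hx : ∀ i, 0 < x i) (l : ι) :
    mtRho (A l) x ≤ ⨆ p : Fin n × Fin n, B p.1 p.2 * x p.2 / x p.1 := by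
  have hle : ∀ i j, B i j * x j / x i ≤ ⨆ p : Fin n × Fin n, B p.1 p.2 * x p.2 / x p.1 :=
    fun i j => Finite.le_ciSup_of_le (i, j) le_rfl
  have hnonneg := iSup_mul_div_nonneg hB₀ hx
  have hAB : ∀ i j, max (A l i j) (A l j i)⁻¹ ≤ B i j := fun i j =>
    (hB i j).symm ▸ Finite.le_ciSup_of_le l le_rfl
  refine max_le (Real.iSup_le (fun p => (hle p.1 p.2).trans' ?_) hnonneg)
    (Real.sSup_le ?_ hnonneg)
  · exact div_le_div_of_nonneg_right (mul_le_mul_of_nonneg_right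
      ((le_max_left _ _).trans (hAB _ _)) (hx _).le) (hx _).le
  · rintro _ ⟨i, j, hij, rfl⟩
    calc x i / (A l i j * x j) = (A l i j)⁻¹ * x i / x j := by field_simp
      _ ≤ B j i * x i / x j := div_le_div_of_nonneg_right (mul_le_mul_of_nonneg_right
          ((le_max_right _ _).trans (hAB j i)) (hx i).le) (hx j).le
      _ ≤ _ := hle j i

theorem mul_div_le_iSup_mtRho (hB : ∀ i j, B i j = ⨆ l, max (A l i j) (A l j i)⁻¹)
    (hx : ∀ i, 0 < x i) (i j : Fin n) : B i j * x j / x i ≤ ⨆ l, mtRho (A l) x := by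
  have hxji : 0 ≤ x j / x i := div_nonneg (hx j).le (hx i).le
  rw [hB, mul_div_assoc, Real.iSup_mul_of_nonneg hxji]
  refine Real.iSup_le (fun l => ?_) (Real.iSup_nonneg fun l => mtRho_nonneg _ hx)
  refine Finite.le_ciSup_of_le l ?_
  rw [max_mul_of_nonneg _ _ hxji]
  refine max_le ((mul_div_assoc _ _ _).symm.trans_le (le_mtRho_left _ i j)) ?_
  rcases le_or_gt (A l j i) 0 with h | h
  · exact (mul_nonpos_of_nonpos_of_nonneg (inv_nonpos.mpr h) hxji).trans (mtRho_nonneg _ hx)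
  · calc (A l j i)⁻¹ * (x j / x i) = x j / (A l j i * x i) := by field_simp
      _ ≤ mtRho (A l) x := le_mtRho_right h

theorem iSup_mtRho_eq (hB : ∀ i j, B i j = ⨆ l, max (A l i j) (A l j i)⁻¹)
    (hB₀ : ∀ i j, 0 ≤ B i j) (hx : ∀ i, 0 < x i) :
    ⨆ l, mtRho (A l) x = ⨆ p : Fin n × Fin n, B p.1 p.2 * x p.2 / x p.1 :=
  le_antisymm
    (Real.iSup_le (mtRho_le_iSup_mul_div hB hB₀ hx) (iSup_mul_div_nonneg hB₀ hx))
    (Real.iSup_le (fun p => mul_div_le_iSup_mtRho hB hx p.1 p.2)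
      (Real.iSup_nonneg fun _ => mtRho_nonneg _ hx))

theorem iSup_mul_div_le_iff (hx : ∀ i, 0 < x i) {r : ℝ} (hr : 0 < r) :
    (⨆ p : Fin n × Fin n, B p.1 p.2 * x p.2 / x p.1) ≤ r ↔ ∀ i j, (r⁻¹ • B) i j * x j ≤ x i := by
  have hterm : ∀ i j, B i j * x j / x i ≤ r ↔ (r⁻¹ • B) i j * x j ≤ x i := fun i j => by
    rw [div_le_iff₀ (hx i), Matrix.smul_apply, smul_eq_mul, mul_assoc, inv_mul_le_iff₀ hr]
  refine ⟨fun h i j => (hterm i j).mp ((Finite.le_ciSup_of_le (i, j) le_rfl).trans h),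
    fun h => Real.iSup_le (fun p => (hterm p.1 p.2).mpr (h p.1 p.2)) hr.le⟩

theorem mtSpecRad_le_iSup_mul_div (hB₀ : ∀ i j, 0 ≤ B i j) (hx : ∀ i, 0 < x i) :
    mtSpecRad B ≤ ⨆ p : Fin n × Fin n, B p.1 p.2 * x p.2 / x p.1 :=
  mtSpecRad_le_of_mul_le hB₀ hx (iSup_mul_div_nonneg hB₀ hx)
    fun i j => (div_le_iff₀ (hx i)).mp (Finite.le_ciSup_of_le (i, j) le_rfl)

end Objective

theorem mt_rho_multi_minimizers_general {n m : ℕ} (hn : 1 ≤ n)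
    (A : Fin m → Matrix (Fin n) (Fin n) ℝ)
    (hAA : ∀ i j, ∃ l, 0 < A l i j ∨ 0 < A l j i)
    (B : Matrix (Fin n) (Fin n) ℝ)
    (hB : ∀ i j, B i j = ⨆ l : Fin m, max (A l i j) (A l j i)⁻¹)
    (μ : ℝ) (hμ : μ = mtSpecRad B) (x : Fin n → ℝ) (hx : ∀ i, 0 < x i) :
    (⨆ l : Fin m, mtRho (A l) x) = μ ↔
      ∃ u : Fin n → ℝ, (∀ i, 0 < u i) ∧ x = mtVecMul (mtStar (μ⁻¹ • B)) u := by
  have hBpos : ∀ i j, 0 < B i j := fun i j => by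
    obtain ⟨l, hl⟩ := hAA i j
    rw [hB]
    refine Finite.le_ciSup_of_le l le_rfl |>.trans_lt' ?_
    exact hl.elim lt_max_of_lt_left fun h => lt_max_of_lt_right (inv_pos.mpr h)
  have hB₀ : ∀ i j, 0 ≤ B i j := fun i j => (hBpos i j).le
  subst hμ
  have hμ : 0 < mtSpecRad B := (hBpos ⟨0, hn⟩ ⟨0, hn⟩).trans_le (diag_le_mtSpecRad hB₀ _)
  have hC : ∀ i j, 0 ≤ ((mtSpecRad B)⁻¹ • B) i j := fun i j =>
    mul_nonneg (inv_nonneg.mpr hμ.le) (hB₀ i j)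
  rw [iSup_mtRho_eq hB hB₀ hx, eq_comm, ← (mtSpecRad_le_iSup_mul_div hB₀ hx).ge_iff_eq,
    iSup_mul_div_le_iff hx hμ]
  exact subeigen_iff_exists_eq_mtVecMul_mtStar hC
    (closedWalksWeightLeOne_inv_mtSpecRad_smul hB₀ hμ) hx

/-- A positive vector `x` satisfies `max_l ρ(A_l, x) = μ` (i.e. minimizes
the simultaneous objective) iff `x = (μ⁻¹ B)^* ⊗ u` for some positive `u`, where
`B_{ij} = max_l max((A_l)_{ij}, ((A_l)_{ji})⁻)` and `μ = λ(B)`. -/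
theorem mt_rho_multi_minimizers {n m : ℕ} (hn : 1 ≤ n) (hm : 1 ≤ m)
    (A : Fin m → Matrix (Fin n) (Fin n) ℝ)
    (hA : ∀ l i j, 0 ≤ A l i j)
    (hAA : ∀ i j, ∃ l, 0 < A l i j ∨ 0 < A l j i)
    (B : Matrix (Fin n) (Fin n) ℝ)
    (hB : ∀ i j, B i j = ⨆ l : Fin m, max (A l i j) (A l j i)⁻¹)
    (μ : ℝ) (hμ : μ = mtSpecRad B) (x : Fin n → ℝ) (hx : ∀ i, 0 < x i) :
    (⨆ l : Fin m, mtRho (A l) x) = μ ↔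
      ∃ u : Fin n → ℝ, (∀ i, 0 < u i) ∧ x = mtVecMul (mtStar (μ⁻¹ • B)) u :=
  mt_rho_multi_minimizers_general hn A hAA B hB μ hμ x hx

end
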